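/- For any odd positive integer n and non-negative integer i, the polynomial f(x) = x^{(3^n-1)/2 + 2^i} + 2x^{(3^n-1)/2 + 3} + 2x^{(3^n-1)/2 + 2} + 2x^{(3^n-1)/2 + 1} + x^{2^i} + x^3 + x^2 + x is a permutation polynomial of F_{3^n}. -/

import Mathlib

/-!
Write `e = (q - 1) / 2` and `χ(x) = x ^ e` for the quadratic character of `F = 𝔽_q`, `q = 3 ^ n`.
Since `x ^ (e + k) = χ(x) x ^ k`, in characteristic `3` the polynomial collapses to `-x ^ (2 ^ i)` on
nonzero squares and to `-x (x - 1) ^ 2` on non-squares. As `q ≡ 3 (mod 4)`, `-1` is a non-square,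
so `f` swaps squares and non-squares. On squares `x ↦ x ^ (2 ^ i)` is injective because `e` is odd;
on non-squares, `x (x - 1) ^ 2 = y (y - 1) ^ 2` with `x ≠ y` forces `x = (x - y + 1) ^ 2`.
-/

theorem eq_of_pow_eq_pow_of_coprime {G₀ : Type*} [CommGroupWithZero G₀] {x y : G₀} {m e : ℕ}
    (hme : m.Coprime e) (hy : y ≠ 0) (hm : x ^ m = y ^ m) (he : x ^ e = y ^ e) : x = y := by
  have hm' : (x / y) ^ m = 1 := by rw [div_pow, hm, div_self (pow_ne_zero _ hy)]
  have he' : (x / y) ^ e = 1 := by rw [div_pow, he, div_self (pow_ne_zero _ hy)]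
  have := pow_gcd_eq_one.mpr ⟨hm', he'⟩
  rwa [hme.gcd_eq_one, pow_one, div_eq_one_iff_eq hy] at this

theorem eq_or_eq_sq_of_mul_sub_one_sq_eq {R : Type*} [CommRing R] [IsDomain R] [CharP R 3]
    {x y : R} (h : x * (x - 1) ^ 2 = y * (y - 1) ^ 2) : x = y ∨ x = (x - y + 1) ^ 2 := by
  have h3 : (3 : R) = 0 := CharP.cast_eq_zero R 3
  have hfactor : (x - y) * ((x - y) ^ 2 + x + y + 1) = 0 := by
    linear_combination h + (x * y * (y - x) + x ^ 2 - y ^ 2) * h3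
  rcases mul_eq_zero.mp hfactor with hxy | hq
  · exact .inl (sub_eq_zero.mp hxy)
  · exact .inr (by linear_combination -hq + y * h3)

section PermPoly

variable {R : Type*} [CommRing R]

-- The polynomial `f` of the header, with `e = (q - 1) / 2` and `m = 2 ^ i`.
def permPoly (e m : ℕ) (x : R) : R :=
  x ^ (e + m) + 2 * x ^ (e + 3) + 2 * x ^ (e + 2) + 2 * x ^ (e + 1) + x ^ m + x ^ 3 + x ^ 2 + x

theorem permPoly_zero {e m : ℕ} (hm : m ≠ 0) : permPoly e m (0 : R) = 0 := by
  simp [permPoly, hm]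

variable [CharP R 3] {e m : ℕ} {x : R}

theorem permPoly_of_pow_eq_one (hx : x ^ e = 1) : permPoly e m x = -x ^ m := by
  have h3 : (3 : R) = 0 := CharP.cast_eq_zero R 3
  simp only [permPoly, pow_add, hx, one_mul]
  linear_combination (x ^ m + x ^ 3 + x ^ 2 + x) * h3

theorem permPoly_of_pow_eq_neg_one (hx : x ^ e = -1) : permPoly e m x = -(x * (x - 1) ^ 2) := by
  have h3 : (3 : R) = 0 := CharP.cast_eq_zero R 3
  simp only [permPoly, pow_add, hx]
  linear_combination -x ^ 2 * h3

end PermPoly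

section CharThree

open FiniteField

variable {F : Type*} [Field F] [CharP F 3]

theorem ringChar_ne_two_of_charP_three : ringChar F ≠ 2 := by
  rw [ringChar.eq F 3]; decide

theorem neg_one_ne_one_of_charP_three : (-1 : F) ≠ 1 :=
  Ring.neg_one_ne_one_of_char_ne_two ringChar_ne_two_of_charP_three

variable [Fintype F]

theorem sq_pow_card_div_two {y : F} (hy : y ≠ 0) : (y ^ 2) ^ (Fintype.card F / 2) = 1 :=
  (isSquare_iff ringChar_ne_two_of_charP_three (pow_ne_zero 2 hy)).mp (IsSquare.sq y)

variable {m : ℕ}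

theorem permPoly_pow_card_div_two (hq : Fintype.card F % 4 = 3) {x : F} (hx : x ≠ 0) :
    permPoly (Fintype.card F / 2) m x ^ (Fintype.card F / 2) = -x ^ (Fintype.card F / 2) := by
  have hodd : Odd (Fintype.card F / 2) := Nat.odd_iff.mpr (by omega)
  rcases pow_dichotomy ringChar_ne_two_of_charP_three hx with h | h
  · rw [permPoly_of_pow_eq_one h, neg_pow, hodd.neg_one_pow, pow_right_comm, h, one_pow, mul_one]
  · have hx1 : x - 1 ≠ 0 := by
      intro hx1
      rw [sub_eq_zero.mp hx1, one_pow] at h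
      exact neg_one_ne_one_of_charP_three h.symm
    rw [permPoly_of_pow_eq_neg_one h, neg_pow, hodd.neg_one_pow, mul_pow, sq_pow_card_div_two hx1]
    ring

theorem permPoly_eq_zero_iff (hq : Fintype.card F % 4 = 3) (hm : m ≠ 0) {x : F} :
    permPoly (Fintype.card F / 2) m x = 0 ↔ x = 0 := by
  refine ⟨fun h ↦ by_contra fun hx ↦ ?_, by rintro rfl; exact permPoly_zero hm⟩
  have := permPoly_pow_card_div_two (m := m) hq hx
  rw [h, zero_pow (by omega), zero_eq_neg] at this
  exact hx (pow_eq_zero_iff (by omega) |>.mp this)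

theorem bijective_permPoly (hq : Fintype.card F % 4 = 3) (hm : m ≠ 0)
    (hme : m.Coprime (Fintype.card F / 2)) :
    Function.Bijective (permPoly (Fintype.card F / 2) m : F → F) := by
  rw [← Finite.injective_iff_bijective]
  intro a b hab
  by_cases ha : a = 0
  · rw [ha, permPoly_zero hm, eq_comm, permPoly_eq_zero_iff hq hm] at hab
    rw [ha, hab]
  have hb : b ≠ 0 := by rwa [ne_eq, ← permPoly_eq_zero_iff hq hm, ← hab, permPoly_eq_zero_iff hq hm]
  have hχ : a ^ (Fintype.card F / 2) = b ^ (Fintype.card F / 2) := by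
    have h := permPoly_pow_card_div_two (m := m) hq ha
    rwa [hab, permPoly_pow_card_div_two hq hb, neg_inj, eq_comm] at h
  rcases pow_dichotomy ringChar_ne_two_of_charP_three ha with h | h
  · refine eq_of_pow_eq_pow_of_coprime hme hb ?_ hχ
    rw [permPoly_of_pow_eq_one h, permPoly_of_pow_eq_one (hχ ▸ h)] at hab
    exact neg_inj.mp hab
  · rw [permPoly_of_pow_eq_neg_one h, permPoly_of_pow_eq_neg_one (hχ ▸ h), neg_inj] at hab
    refine (eq_or_eq_sq_of_mul_sub_one_sq_eq hab).resolve_right fun hsq ↦ ?_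
    have hne : a - b + 1 ≠ 0 := fun h0 ↦ ha (by rw [hsq, h0]; ring)
    rw [hsq, sq_pow_card_div_two hne] at h
    exact neg_one_ne_one_of_charP_three h.symm

end CharThree

theorem stmt_10_general {F : Type*} [Field F] [Fintype F] (n i : ℕ) (hn : Odd n)
    (hcard : Fintype.card F = 3 ^ n) :
    Function.Bijective (fun x : F =>
      x ^ ((3 ^ n - 1) / 2 + 2 ^ i) + 2 * x ^ ((3 ^ n - 1) / 2 + 3) +
        2 * x ^ ((3 ^ n - 1) / 2 + 2) + 2 * x ^ ((3 ^ n - 1) / 2 + 1) +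
        x ^ (2 ^ i) + x ^ 3 + x ^ 2 + x) := by
  have : CharP F 3 := charP_of_card_eq_prime_pow hcard
  have hq : Fintype.card F % 4 = 3 := by
    obtain ⟨k, rfl⟩ := hn
    rw [hcard, pow_succ, pow_mul, Nat.mul_mod, Nat.pow_mod]
    norm_num
  have he : Fintype.card F / 2 = (3 ^ n - 1) / 2 := by omega
  have hcop : (2 ^ i).Coprime (Fintype.card F / 2) :=
    Nat.Coprime.pow_left i (Nat.coprime_two_left.mpr (Nat.odd_iff.mpr (by omega)))
  have h := bijective_permPoly hq (by positivity) hcop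
  rwa [he] at h

theorem stmt_10 {F : Type*} [Field F] [Fintype F] (n i : ℕ) (hn : Odd n) (hn0 : 0 < n)
    (hcard : Fintype.card F = 3 ^ n) :
    Function.Bijective (fun x : F =>
      x ^ ((3 ^ n - 1) / 2 + 2 ^ i) + 2 * x ^ ((3 ^ n - 1) / 2 + 3) +
        2 * x ^ ((3 ^ n - 1) / 2 + 2) + 2 * x ^ ((3 ^ n - 1) / 2 + 1) +
        x ^ (2 ^ i) + x ^ 3 + x ^ 2 + x) :=
  stmt_10_general n i hn hcard
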